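/- Let n ≥ 1, let C = (C_i^j(d)) be any collection of elements of ℚ_α indexed by integers d ≥ 1 and ordered pairs i ≠ j in {1,…,n}, and let η ∈ ℚ_α(x) be such that η(α_i) is well-defined and nonzero for every i. Suppose F, F′ ∈ H_α⟪ħ⟫[[q]] are such that F(α_i,ħ,q) ∈ ℚ_α(ħ)[[q]] for every i and F′ is C-recursive. Then for every f ∈ ℚ_α[ħ][[q]] (a power series in q whose coefficients are polynomials in ħ over ℚ_α), the product f·F′ ∈ H_α⟪ħ⟫[[q]] is again C-recursive; and if in addition the pair (F,F′) satisfies the η-MPC, then so does the pair (F, f·F′). -/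

import Mathlib

/-!
Setting: `Kf n = ℚ(α₁,…,αₙ)` is the field of rational functions in `n` variables over `ℚ`,
`Lf n = ℚ_α⟪ħ⟫` is the algebra of Laurent series in `ħ⁻¹` (modeled as Laurent series in the
variable `t = ħ⁻¹`, so that the coefficient of `ħ^r` is the Hahn-series coefficient at `-r`).
An element `F ∈ H_α⟪ħ⟫[[q]]` is modeled by its `n` evaluations `F : Fin n → PowerSeries (Lf n)`
(by the Chinese remainder theorem, `H_α ≅ ∏ᵢ ℚ_α` via `x ↦ (αᵢ)ᵢ`, so this is faithful).
-/

open scoped Classical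

noncomputable section

namespace SQ

/-- The field `ℚ_α = ℚ(α₁,…,αₙ)`. -/
abbrev Kf (n : ℕ) : Type := FractionRing (MvPolynomial (Fin n) ℚ)

/-- The element `αᵢ ∈ ℚ_α`. -/
def alpha (n : ℕ) (i : Fin n) : Kf n :=
  algebraMap (MvPolynomial (Fin n) ℚ) (Kf n) (MvPolynomial.X i)

/-- `ℚ_α⟪ħ⟫`: Laurent series in `t = ħ⁻¹`. -/
abbrev Lf (n : ℕ) : Type := LaurentSeries (Kf n)

/-- `ħ = t⁻¹` where `t` is the Laurent-series variable. -/
def hbar (n : ℕ) : Lf n := HahnSeries.single (-1 : ℤ) 1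

/-- The substitution `ħ ↦ −ħ` on `ℚ_α⟪ħ⟫`. -/
def negH (n : ℕ) (x : Lf n) : Lf n :=
  ⟨fun a => (-1 : Kf n) ^ a * x.coeff a,
    x.isPWO_support'.mono fun a ha => by
      simp only [Function.mem_support] at ha ⊢
      exact fun h => ha (by rw [h, mul_zero])⟩

/-- `x ∈ ℚ_α⟪ħ⟫` lies in (the image of) `ℚ_α(ħ)`, i.e. `Q(ħ)·x = P(ħ)` for some polynomials
`P, Q` with `Q ≠ 0`. -/
def IsRatH (n : ℕ) (x : Lf n) : Prop :=
  ∃ P Q : Polynomial (Kf n), Q ≠ 0 ∧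
    Polynomial.aeval (hbar n) Q * x = Polynomial.aeval (hbar n) P

/-- `x ∈ ℚ_α⟪ħ⟫` is a rational function of `ħ`, regular at `ħ = c`, with value `v` there. -/
def RegEvalAt (n : ℕ) (x : Lf n) (c v : Kf n) : Prop :=
  ∃ P Q : Polynomial (Kf n), Polynomial.eval c Q ≠ 0 ∧
    Polynomial.aeval (hbar n) Q * x = Polynomial.aeval (hbar n) P ∧
    v = Polynomial.eval c P / Polynomial.eval c Q

/-- `x` is a rational function of `ħ` regular at `ħ = c`. -/
def RegAt (n : ℕ) (x : Lf n) (c : Kf n) : Prop := ∃ v : Kf n, RegEvalAt n x c v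

/-- `x` is a Laurent polynomial in `ħ`, i.e. an element of `ℚ_α[ħ,ħ⁻¹]`. -/
def IsLaurentPolyH (n : ℕ) (x : Lf n) : Prop := x.support.Finite

/-- `x` is a polynomial in `ħ`, i.e. an element of `ℚ_α[ħ]`. -/
def IsPolyH (n : ℕ) (x : Lf n) : Prop :=
  ∃ P : Polynomial (Kf n), x = Polynomial.aeval (hbar n) P

/-- Definition 5.1 (`C`-recursivity).  `C d i j` is the structure constant `C_i^j(d)`
(only the values with `d ≥ 1` and `j ≠ i` are used). -/
def CRecursive (n : ℕ) (C : ℕ → Fin n → Fin n → Kf n)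
    (F : Fin n → PowerSeries (Lf n)) : Prop :=
  ∀ dstar : ℕ,
    (∀ d : ℕ, 1 ≤ d → d ≤ dstar → ∀ i : Fin n,
        IsRatH n (PowerSeries.coeff (R := Lf n) (dstar - d) (F i))) →
    (∀ d : ℕ, 1 ≤ d → d < dstar → ∀ i j : Fin n, i ≠ j →
        RegAt n (PowerSeries.coeff (R := Lf n) d (F i))
          ((alpha n i - alpha n j) / (d : Kf n))) →
    ∀ i : Fin n, ∃ v : ℕ → Fin n → Kf n,
      (∀ d : ℕ, ∀ j : Fin n, 1 ≤ d → d ≤ dstar → j ≠ i →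
          RegEvalAt n (PowerSeries.coeff (R := Lf n) (dstar - d) (F j))
            ((alpha n j - alpha n i) / (d : Kf n)) (v d j)) ∧
      IsLaurentPolyH n
        (PowerSeries.coeff (R := Lf n) dstar (F i)
          - ∑ d ∈ Finset.Icc 1 dstar, ∑ j ∈ Finset.univ.erase i,
              algebraMap (Kf n) (Lf n) (C d i j)
                * (hbar n
                    - algebraMap (Kf n) (Lf n)
                        ((alpha n j - alpha n i) / (d : Kf n)))⁻¹
                * algebraMap (Kf n) (Lf n) (v d j))

/-- The coefficient of `z^a q^D` in
`Φ^η_{F,F′}(ħ,z,q) = ∑ᵢ (η(αᵢ) e^{αᵢ z} / ∏_{k≠i}(αᵢ−α_k)) F(αᵢ,ħ,q e^{ħz}) F′(αᵢ,−ħ,q)`.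
(Only the values `η(αᵢ)` of the rational function `η` enter the definition, so `η` is
represented by its tuple of values `eta : Fin n → Kf n`.) -/
def PhiCoeff (n : ℕ) (eta : Fin n → Kf n) (F F' : Fin n → PowerSeries (Lf n))
    (a D : ℕ) : Lf n :=
  ∑ i : Fin n, ∑ d ∈ Finset.range (D + 1), ∑ m ∈ Finset.range (a + 1),
    algebraMap (Kf n) (Lf n)
        (eta i / (∏ k ∈ Finset.univ.erase i, (alpha n i - alpha n k))
          * (alpha n i ^ m / (Nat.factorial m : Kf n))
          * ((d : Kf n) ^ (a - m) / (Nat.factorial (a - m) : Kf n)))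
      * hbar n ^ (a - m)
      * PowerSeries.coeff (R := Lf n) d (F i)
      * negH n (PowerSeries.coeff (R := Lf n) (D - d) (F' i))

/-- The η mutual polynomiality condition: every coefficient of `z^a q^D` of `Φ^η_{F,F′}`
is a polynomial in `ħ`. -/
def MPC (n : ℕ) (eta : Fin n → Kf n) (F F' : Fin n → PowerSeries (Lf n)) : Prop :=
  ∀ a D : ℕ, IsPolyH n (PhiCoeff n eta F F' a D)

/-- Multiplication of `F′ ∈ H_α⟪ħ⟫[[q]]` by `f ∈ ℚ_α[ħ][[q]]` (a power series in `q` with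
coefficients polynomials in `ħ`): componentwise product after mapping the coefficients of `f`
into `ℚ_α⟪ħ⟫` via `ħ`. -/
def mulSeries (n : ℕ) (f : PowerSeries (Polynomial (Kf n)))
    (F' : Fin n → PowerSeries (Lf n)) : Fin n → PowerSeries (Lf n) :=
  fun i =>
    PowerSeries.map ((Polynomial.aeval (hbar n)).toRingHom : Polynomial (Kf n) →+* Lf n) f
      * F' i

/-!
By strong induction on the degree, every coefficient of a `C`-recursive `F′` is rational in `ħ`
and regular at all the points `(αᵢ − αⱼ)/d`: the recursion writes it as a Laurent polynomial plus
simple poles at the points `(αⱼ − αᵢ)/d'`, and these never meet `(αᵢ − αⱼ)/d`. So the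
hypotheses of the recursion are automatic and it holds in every degree. The recursion in degree
`D` only involves the coefficients up to `q^D`, and it is stable under sums, under the shift by
`q^e`, and under multiplication by a polynomial `P(ħ)`: the residue at `ħ = c` gets multiplied
by `P(c)`, because `(P(ħ) − P(c))/(ħ − c)` is a polynomial. Truncating `f` therefore gives the
recursion for `f·F′`. Mutual polynomiality follows from
`Φ^η_{F, f·F′}(ħ, z, q) = f(−ħ, q) · Φ^η_{F,F′}(ħ, z, q)`.
-/

variable {n : ℕ}

lemma _root_.HahnSeries.eq_sum_single_of_support_finite {Γ R : Type*} [PartialOrder Γ]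
    [AddCommMonoid R] {x : HahnSeries Γ R} (hx : x.support.Finite) :
    x = ∑ a ∈ hx.toFinset, HahnSeries.single a (x.coeff a) := by
  ext b
  simp only [HahnSeries.coeff_sum, HahnSeries.coeff_single]
  rw [Finset.sum_ite_eq]
  split_ifs <;> simp_all

lemma algebraMap_eq_single (c : Kf n) :
    algebraMap (Kf n) (Lf n) c = HahnSeries.single 0 c := by
  rw [HahnSeries.algebraMap_apply', PowerSeries.algebraMap_apply, Algebra.algebraMap_self,
    RingHom.id_apply, HahnSeries.ofPowerSeries_C, HahnSeries.C_apply]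

lemma hbar_pow (k : ℕ) : hbar n ^ k = HahnSeries.single (-(k : ℤ)) 1 := by
  simp [hbar, HahnSeries.single_pow]

lemma algebraMap_mul_hbar_pow (c : Kf n) (k : ℕ) :
    algebraMap (Kf n) (Lf n) c * hbar n ^ k = HahnSeries.single (-(k : ℤ)) c := by
  rw [algebraMap_eq_single, hbar_pow, HahnSeries.single_mul_single, zero_add, mul_one]

lemma hbar_sub_algebraMap_ne_zero (c : Kf n) : hbar n - algebraMap (Kf n) (Lf n) c ≠ 0 := by
  intro h
  have := congrArg (fun x : Lf n => x.coeff (-1)) h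
  simp [hbar, algebraMap_eq_single] at this

lemma isPolyH_iff_mem_range {x : Lf n} :
    IsPolyH n x ↔ x ∈ (Polynomial.aeval (hbar n) : Polynomial (Kf n) →ₐ[Kf n] Lf n).range := by
  simp [IsPolyH, eq_comm]

def laurentPolynomials (n : ℕ) : Subalgebra (Kf n) (Lf n) where
  carrier := {x | IsLaurentPolyH n x}
  mul_mem' hx hy := (hx.add hy).subset HahnSeries.support_mul_subset
  add_mem' hx hy := (hx.union hy).subset (HahnSeries.support_add_subset _ _)
  algebraMap_mem' c := by
    simpa [IsLaurentPolyH, algebraMap_eq_single] using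
      (Set.finite_singleton 0).subset HahnSeries.support_single_subset

lemma mem_laurentPolynomials {x : Lf n} : x ∈ laurentPolynomials n ↔ IsLaurentPolyH n x :=
  Iff.rfl

lemma aeval_hbar_mem_laurentPolynomials (P : Polynomial (Kf n)) :
    Polynomial.aeval (hbar n) P ∈ laurentPolynomials n :=
  Algebra.adjoin_le (Set.singleton_subset_iff.2
      ((Set.finite_singleton _).subset HahnSeries.support_single_subset))
    (Polynomial.aeval_mem_adjoin_singleton _ _)

lemma hbar_pow_mul_single (m : ℕ) (a : ℤ) (r : Kf n) :
    hbar n ^ m * HahnSeries.single a r = HahnSeries.single (a - m) r := by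
  rw [hbar_pow, HahnSeries.single_mul_single, one_mul, neg_add_eq_sub]

lemma exists_hbar_pow_mul_eq_aeval {x : Lf n} (hx : IsLaurentPolyH n x) :
    ∃ (m : ℕ) (P : Polynomial (Kf n)), hbar n ^ m * x = Polynomial.aeval (hbar n) P := by
  rw [HahnSeries.eq_sum_single_of_support_finite hx]
  refine Finset.sum_induction _ (fun y => ∃ (m : ℕ) (P : Polynomial (Kf n)),
    hbar n ^ m * y = Polynomial.aeval (hbar n) P) ?_ ⟨0, 0, by simp⟩ ?_
  · rintro y z ⟨m, P, hy⟩ ⟨m', P', hz⟩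
    refine ⟨m + m', Polynomial.X ^ m' * P + Polynomial.X ^ m * P', ?_⟩
    simp only [map_add, map_mul, map_pow, Polynomial.aeval_X, ← hy, ← hz]
    ring
  · intro a _
    refine ⟨a.toNat, Polynomial.C (x.coeff a) * Polynomial.X ^ (-a).toNat, ?_⟩
    rw [hbar_pow_mul_single, map_mul, map_pow, Polynomial.aeval_C, Polynomial.aeval_X,
      algebraMap_mul_hbar_pow, show a - a.toNat = -((-a).toNat : ℤ) by omega]

lemma IsLaurentPolyH.isRatH {x : Lf n} (hx : IsLaurentPolyH n x) : IsRatH n x := by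
  obtain ⟨m, P, h⟩ := exists_hbar_pow_mul_eq_aeval hx
  exact ⟨P, Polynomial.X ^ m, pow_ne_zero m Polynomial.X_ne_zero, by simpa using h⟩

lemma IsLaurentPolyH.regAt {x : Lf n} (hx : IsLaurentPolyH n x) {c : Kf n} (hc : c ≠ 0) :
    RegAt n x c := by
  obtain ⟨m, P, h⟩ := exists_hbar_pow_mul_eq_aeval hx
  exact ⟨_, P, Polynomial.X ^ m, by simpa using pow_ne_zero m hc, by simpa using h, rfl⟩

lemma isRatH_zero : IsRatH n 0 := ⟨0, 1, one_ne_zero, by simp⟩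

lemma IsRatH.add {x y : Lf n} (hx : IsRatH n x) (hy : IsRatH n y) : IsRatH n (x + y) := by
  obtain ⟨P, Q, hQ, hx⟩ := hx
  obtain ⟨P', Q', hQ', hy⟩ := hy
  refine ⟨P * Q' + P' * Q, Q * Q', mul_ne_zero hQ hQ', ?_⟩
  simp only [map_add, map_mul, ← hx, ← hy]
  ring

lemma regEvalAt_zero (c : Kf n) : RegEvalAt n 0 c 0 := ⟨0, 1, by simp, by simp, by simp⟩

lemma RegEvalAt.add {x y : Lf n} {c v w : Kf n} (hx : RegEvalAt n x c v)
    (hy : RegEvalAt n y c w) : RegEvalAt n (x + y) c (v + w) := by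
  obtain ⟨P, Q, hQ, hx, rfl⟩ := hx
  obtain ⟨P', Q', hQ', hy, rfl⟩ := hy
  refine ⟨P * Q' + P' * Q, Q * Q', by simp [hQ, hQ'], ?_, ?_⟩
  · simp only [map_add, map_mul, ← hx, ← hy]
    ring
  · simp only [Polynomial.eval_add, Polynomial.eval_mul]
    field_simp

lemma RegEvalAt.aeval_mul {x : Lf n} {c v : Kf n} (hx : RegEvalAt n x c v)
    (R : Polynomial (Kf n)) :
    RegEvalAt n (Polynomial.aeval (hbar n) R * x) c (R.eval c * v) := by
  obtain ⟨P, Q, hQ, hx, rfl⟩ := hx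
  refine ⟨R * P, Q, hQ, ?_, ?_⟩
  · rw [map_mul, ← hx]
    ring
  · rw [Polynomial.eval_mul, mul_div_assoc]

lemma regAt_zero (c : Kf n) : RegAt n 0 c := ⟨0, regEvalAt_zero c⟩

lemma RegAt.add {x y : Lf n} {c : Kf n} (hx : RegAt n x c) (hy : RegAt n y c) :
    RegAt n (x + y) c :=
  let ⟨_, hv⟩ := hx
  let ⟨_, hw⟩ := hy
  ⟨_, hv.add hw⟩

section SimplePole

variable (k c v : Kf n)

lemma aeval_X_sub_C_mul_simplePole :
    Polynomial.aeval (hbar n) (Polynomial.X - Polynomial.C c)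
        * (algebraMap (Kf n) (Lf n) k * (hbar n - algebraMap (Kf n) (Lf n) c)⁻¹
          * algebraMap (Kf n) (Lf n) v)
      = Polynomial.aeval (hbar n) (Polynomial.C (k * v)) := by
  have := hbar_sub_algebraMap_ne_zero c
  simp only [map_sub, Polynomial.aeval_X, Polynomial.aeval_C, map_mul]
  field_simp

lemma isRatH_simplePole :
    IsRatH n (algebraMap (Kf n) (Lf n) k * (hbar n - algebraMap (Kf n) (Lf n) c)⁻¹
      * algebraMap (Kf n) (Lf n) v) :=
  ⟨_, _, Polynomial.X_sub_C_ne_zero c, aeval_X_sub_C_mul_simplePole k c v⟩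

lemma regAt_simplePole {p : Kf n} (hp : p ≠ c) :
    RegAt n (algebraMap (Kf n) (Lf n) k * (hbar n - algebraMap (Kf n) (Lf n) c)⁻¹
      * algebraMap (Kf n) (Lf n) v) p :=
  ⟨_, _, _, by simpa [sub_eq_zero] using hp, aeval_X_sub_C_mul_simplePole k c v, rfl⟩

end SimplePole

lemma alpha_injective : Function.Injective (alpha n) :=
  (IsFractionRing.injective (MvPolynomial (Fin n) ℚ) (Kf n)).comp MvPolynomial.X_injective

lemma natCast_mul_alpha_sub_ne {i j j' : Fin n} (hj : j ≠ i) (hj' : j' ≠ i) {d d' : ℕ}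
    (hd : d ≠ 0) :
    (d' : Kf n) * (alpha n i - alpha n j) ≠ d * (alpha n j' - alpha n i) := by
  intro h
  have hpoly : (d' : MvPolynomial (Fin n) ℚ) * (MvPolynomial.X i - MvPolynomial.X j)
      = (d : MvPolynomial (Fin n) ℚ) * (MvPolynomial.X j' - MvPolynomial.X i) :=
    IsFractionRing.injective (MvPolynomial (Fin n) ℚ) (Kf n) (by
      rw [map_mul, map_mul, map_natCast, map_natCast, map_sub, map_sub]
      exact h)
  -- at `Xᵢ = 1` and `Xₖ = 0` for `k ≠ i` this reads `d' = -d`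
  have := congrArg (MvPolynomial.eval (Pi.single i 1)) hpoly
  simp [hj, hj'] at this
  exact hd this.2

lemma aeval_sub_eval_mul_inv_mem_laurentPolynomials (P : Polynomial (Kf n)) (c : Kf n) :
    (Polynomial.aeval (hbar n) P - algebraMap (Kf n) (Lf n) (P.eval c))
        * (hbar n - algebraMap (Kf n) (Lf n) c)⁻¹ ∈ laurentPolynomials n := by
  obtain ⟨Q, hQ⟩ := Polynomial.X_sub_C_dvd_sub_C_eval (p := P) (a := c)
  have hQ' := congrArg (Polynomial.aeval (hbar n)) hQ
  simp only [map_sub, map_mul, Polynomial.aeval_X, Polynomial.aeval_C] at hQ'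
  rw [hQ', mul_comm, ← mul_assoc, inv_mul_cancel₀ (hbar_sub_algebraMap_ne_zero c), one_mul]
  exact aeval_hbar_mem_laurentPolynomials Q

def pole (n : ℕ) (i j : Fin n) (d : ℕ) : Kf n := (alpha n j - alpha n i) / d

lemma pole_ne_zero {i j : Fin n} (hij : i ≠ j) {d : ℕ} (hd : d ≠ 0) : pole n i j d ≠ 0 :=
  div_ne_zero (sub_ne_zero.2 (alpha_injective.ne hij.symm)) (Nat.cast_ne_zero.2 hd)

lemma pole_ne_pole {i j j' : Fin n} (hj : j ≠ i) (hj' : j' ≠ i) {d d' : ℕ} (hd : d ≠ 0)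
    (hd' : d' ≠ 0) : pole n j i d ≠ pole n i j' d' := by
  rw [pole, pole, Ne, div_eq_div_iff (Nat.cast_ne_zero.2 hd) (Nat.cast_ne_zero.2 hd'),
    mul_comm, mul_comm (_ - _)]
  exact natCast_mul_alpha_sub_ne hj hj' hd

def poleSum (C : ℕ → Fin n → Fin n → Kf n) (i : Fin n) (D : ℕ) (v : ℕ → Fin n → Kf n) :
    Lf n :=
  ∑ d ∈ Finset.Icc 1 D, ∑ j ∈ Finset.univ.erase i,
    algebraMap (Kf n) (Lf n) (C d i j) * (hbar n - algebraMap (Kf n) (Lf n) (pole n i j d))⁻¹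
      * algebraMap (Kf n) (Lf n) (v d j)

section PoleSum

variable (C : ℕ → Fin n → Fin n → Kf n) (i : Fin n) (D : ℕ)

lemma poleSum_zero : poleSum C i D 0 = 0 := by
  simp [poleSum]

lemma poleSum_add (v w : ℕ → Fin n → Kf n) :
    poleSum C i D (v + w) = poleSum C i D v + poleSum C i D w := by
  simp only [poleSum, Pi.add_apply, map_add, mul_add, Finset.sum_add_distrib]

lemma isRatH_poleSum (v : ℕ → Fin n → Kf n) : IsRatH n (poleSum C i D v) :=
  Finset.sum_induction _ _ (fun _ _ => IsRatH.add) isRatH_zero fun _ _ =>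
    Finset.sum_induction _ _ (fun _ _ => IsRatH.add) isRatH_zero fun _ _ =>
      isRatH_simplePole _ _ _

lemma regAt_poleSum (v : ℕ → Fin n → Kf n) {j : Fin n} (hj : j ≠ i) {d : ℕ} (hd : d ≠ 0) :
    RegAt n (poleSum C i D v) (pole n j i d) :=
  Finset.sum_induction _ (RegAt n · (pole n j i d)) (fun _ _ => RegAt.add) (regAt_zero _)
    fun _ hd' => Finset.sum_induction _ (RegAt n · (pole n j i d)) (fun _ _ => RegAt.add)
      (regAt_zero _) fun _ hj' =>
      regAt_simplePole _ _ _ <| pole_ne_pole hj (Finset.ne_of_mem_erase hj') hd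
        (Nat.pos_iff_ne_zero.1 (Finset.mem_Icc.1 hd').1)

lemma aeval_mul_poleSum_sub_mem (P : Polynomial (Kf n)) (v : ℕ → Fin n → Kf n) :
    Polynomial.aeval (hbar n) P * poleSum C i D v
        - poleSum C i D (fun d j => P.eval (pole n i j d) * v d j)
      ∈ laurentPolynomials n := by
  simp only [poleSum, Finset.mul_sum, ← Finset.sum_sub_distrib]
  refine Subalgebra.sum_mem _ fun d _ => Subalgebra.sum_mem _ fun j _ => ?_
  have key := aeval_sub_eval_mul_inv_mem_laurentPolynomials P (pole n i j d)
  convert Subalgebra.mul_mem _ (Subalgebra.algebraMap_mem _ (C d i j * v d j)) key using 1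
  simp only [map_mul]
  ring

lemma poleSum_truncate (v : ℕ → Fin n → Kf n) {e : ℕ} :
    poleSum C i D (fun d j => if d ≤ D - e then v d j else 0) = poleSum C i (D - e) v := by
  rw [poleSum, poleSum, ← Finset.sum_subset (Finset.Icc_subset_Icc_right (Nat.sub_le D e))]
  · refine Finset.sum_congr rfl fun d hd => ?_
    simp only [if_pos (Finset.mem_Icc.1 hd).2]
  · intro d hd hd'
    have : ¬d ≤ D - e := fun h => hd' (Finset.mem_Icc.2 ⟨(Finset.mem_Icc.1 hd).1, h⟩)
    simp only [if_neg this, map_zero, mul_zero, Finset.sum_const_zero]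

end PoleSum

def RecursionAt (C : ℕ → Fin n → Fin n → Kf n) (G : Fin n → PowerSeries (Lf n)) (D : ℕ)
    (i : Fin n) : Prop :=
  ∃ v : ℕ → Fin n → Kf n,
    (∀ d : ℕ, ∀ j : Fin n, 1 ≤ d → d ≤ D → j ≠ i →
        RegEvalAt n (PowerSeries.coeff (R := Lf n) (D - d) (G j)) (pole n i j d) (v d j)) ∧
      IsLaurentPolyH n (PowerSeries.coeff (R := Lf n) D (G i) - poleSum C i D v)

section RecursionAt

variable {C : ℕ → Fin n → Fin n → Kf n} {G H : Fin n → PowerSeries (Lf n)} {D : ℕ} {i : Fin n}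

lemma cRecursive_of_recursionAt (h : ∀ D i, RecursionAt C G D i) : CRecursive n C G :=
  fun D _ _ i => h D i

lemma recursionAt_zero : RecursionAt C 0 D i :=
  ⟨0, fun _ _ _ _ _ => by simpa using regEvalAt_zero _, by
    simpa only [Pi.zero_apply, map_zero, poleSum_zero, sub_zero, mem_laurentPolynomials] using
      (laurentPolynomials n).zero_mem⟩

lemma RecursionAt.add (hG : RecursionAt C G D i) (hH : RecursionAt C H D i) :
    RecursionAt C (G + H) D i := by
  obtain ⟨v, hv, hvL⟩ := hG
  obtain ⟨w, hw, hwL⟩ := hH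
  refine ⟨v + w, fun d j h1 h2 hj => by simpa using (hv d j h1 h2 hj).add (hw d j h1 h2 hj), ?_⟩
  rw [← mem_laurentPolynomials] at hvL hwL ⊢
  convert add_mem hvL hwL using 1
  simp only [Pi.add_apply, map_add, poleSum_add]
  abel

lemma recursionAt_sum {ι : Type*} (s : Finset ι) (G : ι → Fin n → PowerSeries (Lf n))
    (h : ∀ e ∈ s, RecursionAt C (G e) D i) : RecursionAt C (∑ e ∈ s, G e) D i :=
  Finset.sum_induction _ (RecursionAt C · D i) (fun _ _ => RecursionAt.add) recursionAt_zero h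

lemma RecursionAt.aeval_smul (hG : RecursionAt C G D i) (P : Polynomial (Kf n)) :
    RecursionAt C (Polynomial.aeval (hbar n) P • G) D i := by
  obtain ⟨v, hv, hL⟩ := hG
  refine ⟨fun d j => P.eval (pole n i j d) * v d j,
    fun d j h1 h2 hj => by simpa using (hv d j h1 h2 hj).aeval_mul P, ?_⟩
  rw [← mem_laurentPolynomials] at hL ⊢
  convert add_mem (mul_mem (aeval_hbar_mem_laurentPolynomials P) hL)
    (aeval_mul_poleSum_sub_mem C i D P v) using 1
  simp only [Pi.smul_apply, PowerSeries.coeff_smul, smul_eq_mul]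
  ring

lemma RecursionAt.X_pow_mul {e : ℕ} (he : e ≤ D) (hG : RecursionAt C G (D - e) i) :
    RecursionAt C (fun j => PowerSeries.X ^ e * G j) D i := by
  obtain ⟨v, hv, hL⟩ := hG
  refine ⟨fun d j => if d ≤ D - e then v d j else 0, fun d j h1 h2 hj => ?_, ?_⟩
  · simp only [PowerSeries.coeff_X_pow_mul']
    split_ifs
    · rw [show D - d - e = D - e - d by omega]
      exact hv d j h1 (by omega) hj
    · omega
    · omega
    · exact regEvalAt_zero _
  · simpa only [PowerSeries.coeff_X_pow_mul', if_pos he, poleSum_truncate] using hL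

lemma RecursionAt.congr (hG : RecursionAt C G D i)
    (hGH : ∀ k ≤ D, ∀ j, PowerSeries.coeff k (G j) = PowerSeries.coeff k (H j)) :
    RecursionAt C H D i := by
  obtain ⟨v, hv, hL⟩ := hG
  exact ⟨v, fun d j h1 h2 hj => hGH (D - d) (Nat.sub_le D d) j ▸ hv d j h1 h2 hj,
    hGH D le_rfl i ▸ hL⟩

end RecursionAt

section CRecursive

variable {C : ℕ → Fin n → Fin n → Kf n}

lemma isRatH_and_regAt_of_isLaurentPolyH_sub_poleSum {x : Lf n} {i : Fin n} {D : ℕ}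
    {v : ℕ → Fin n → Kf n} (h : IsLaurentPolyH n (x - poleSum C i D v)) :
    IsRatH n x ∧ ∀ j, j ≠ i → ∀ d, d ≠ 0 → RegAt n x (pole n j i d) := by
  rw [← sub_add_cancel x (poleSum C i D v)]
  exact ⟨h.isRatH.add (isRatH_poleSum C i D v), fun j hj d hd =>
    (h.regAt (pole_ne_zero hj hd)).add (regAt_poleSum C i D v hj hd)⟩

lemma CRecursive.isRatH_and_regAt_coeff {G : Fin n → PowerSeries (Lf n)}
    (h : CRecursive n C G) (D : ℕ) :
    (∀ i, IsRatH n (PowerSeries.coeff D (G i))) ∧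
      ∀ i j, j ≠ i → ∀ d, d ≠ 0 → RegAt n (PowerSeries.coeff D (G i)) (pole n j i d) := by
  induction D using Nat.strong_induction_on with
  | _ D IH =>
    choose v _ hL using h D (fun d _ _ i => (IH (D - d) (by omega)).1 i)
      (fun d _ hdD i j hij => (IH d hdD).2 i j hij.symm d (by omega))
    exact ⟨fun i => (isRatH_and_regAt_of_isLaurentPolyH_sub_poleSum (hL i)).1,
      fun i => (isRatH_and_regAt_of_isLaurentPolyH_sub_poleSum (hL i)).2⟩

lemma CRecursive.recursionAt {G : Fin n → PowerSeries (Lf n)} (h : CRecursive n C G)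
    (D : ℕ) (i : Fin n) : RecursionAt C G D i :=
  h D (fun d _ _ i => (h.isRatH_and_regAt_coeff (D - d)).1 i)
    (fun d _ _ i j hij => (h.isRatH_and_regAt_coeff d).2 i j hij.symm d (by omega)) i

lemma coeff_mulSeries_eq_coeff_sum (f : PowerSeries (Polynomial (Kf n)))
    (F' : Fin n → PowerSeries (Lf n)) {k D : ℕ} (hk : k ≤ D) (j : Fin n) :
    PowerSeries.coeff k (mulSeries n f F' j)
      = PowerSeries.coeff k ((∑ e ∈ Finset.range (D + 1),
          Polynomial.aeval (hbar n) (PowerSeries.coeff e f)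
            • fun j => PowerSeries.X ^ e * F' j) j) := by
  simp only [Finset.sum_apply, map_sum, Pi.smul_apply, PowerSeries.coeff_smul,
    PowerSeries.coeff_X_pow_mul', smul_eq_mul, mul_ite, mul_zero]
  rw [mulSeries, PowerSeries.coeff_mul, Finset.Nat.sum_antidiagonal_eq_sum_range_succ_mk,
    ← Finset.sum_subset (Finset.range_subset_range.2 (by omega : k + 1 ≤ D + 1))]
  · refine Finset.sum_congr rfl fun e he => ?_
    rw [if_pos (Finset.mem_range_succ_iff.1 he)]
    rfl
  · intro e _ he
    rw [if_neg (mt Finset.mem_range_succ_iff.2 he)]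

lemma CRecursive.mulSeries {F' : Fin n → PowerSeries (Lf n)} (h : CRecursive n C F')
    (f : PowerSeries (Polynomial (Kf n))) : CRecursive n C (mulSeries n f F') :=
  cRecursive_of_recursionAt fun D i =>
    (recursionAt_sum _ _ fun e he =>
      ((h.recursionAt (D - e) i).X_pow_mul (Finset.mem_range_succ_iff.1 he)).aeval_smul _
      ).congr fun _ hk j => (coeff_mulSeries_eq_coeff_sum f F' hk j).symm

end CRecursive

lemma coeff_negH (x : Lf n) (a : ℤ) : (negH n x).coeff a = (-1 : Kf n) ^ a * x.coeff a := rfl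

lemma negH_add (x y : Lf n) : negH n (x + y) = negH n x + negH n y := by
  ext a
  simp only [coeff_negH, HahnSeries.coeff_add, mul_add]

lemma negH_sum {ι : Type*} (s : Finset ι) (x : ι → Lf n) :
    negH n (∑ e ∈ s, x e) = ∑ e ∈ s, negH n (x e) :=
  map_sum (AddMonoidHom.mk' (negH n) negH_add) x s

lemma negH_aeval_mul (P : Polynomial (Kf n)) (x : Lf n) :
    negH n (Polynomial.aeval (hbar n) P * x) = Polynomial.aeval (-hbar n) P * negH n x := by
  induction P using Polynomial.induction_on' with
  | add P Q hP hQ => rw [map_add, add_mul, negH_add, hP, hQ, map_add, add_mul]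
  | monomial k c =>
    have hsign : (-1 : Kf n) ^ k * (-1) ^ k = 1 := by rw [← mul_pow]; simp
    have hm1 : (-1 : Lf n) ^ k = algebraMap (Kf n) (Lf n) ((-1) ^ k) := by simp
    rw [Polynomial.aeval_monomial, Polynomial.aeval_monomial, neg_pow (hbar n) k, hm1,
      ← mul_assoc, ← map_mul, algebraMap_mul_hbar_pow, algebraMap_mul_hbar_pow]
    ext a
    rw [coeff_negH, HahnSeries.coeff_single_mul, HahnSeries.coeff_single_mul, coeff_negH,
      sub_neg_eq_add, zpow_add₀ (by norm_num), zpow_natCast]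
    linear_combination (-(-1 : Kf n) ^ a * c * x.coeff (a + k)) * hsign

def negHSeries (G : PowerSeries (Lf n)) : PowerSeries (Lf n) :=
  PowerSeries.mk fun k => negH n (PowerSeries.coeff k G)

lemma negHSeries_mulSeries (f : PowerSeries (Polynomial (Kf n)))
    (F' : Fin n → PowerSeries (Lf n)) (i : Fin n) :
    negHSeries (mulSeries n f F' i)
      = PowerSeries.map (Polynomial.aeval (-hbar n)).toRingHom f * negHSeries (F' i) := by
  refine PowerSeries.ext fun k => ?_
  simp only [negHSeries, mulSeries, PowerSeries.coeff_mk, PowerSeries.coeff_mul, negH_sum,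
    PowerSeries.coeff_map]
  exact Finset.sum_congr rfl fun p _ => negH_aeval_mul _ _

def phiSeries (eta : Fin n → Kf n) (F : Fin n → PowerSeries (Lf n)) (a : ℕ) (i : Fin n) :
    PowerSeries (Lf n) :=
  PowerSeries.mk fun d => ∑ m ∈ Finset.range (a + 1),
    algebraMap (Kf n) (Lf n)
        (eta i / (∏ k ∈ Finset.univ.erase i, (alpha n i - alpha n k))
          * (alpha n i ^ m / (Nat.factorial m : Kf n))
          * ((d : Kf n) ^ (a - m) / (Nat.factorial (a - m) : Kf n)))
      * hbar n ^ (a - m) * PowerSeries.coeff d (F i)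

lemma phiCoeff_eq_sum_coeff_mul (eta : Fin n → Kf n) (F G : Fin n → PowerSeries (Lf n))
    (a D : ℕ) :
    PhiCoeff n eta F G a D
      = ∑ i, PowerSeries.coeff D (phiSeries eta F a i * negHSeries (G i)) := by
  simp only [PhiCoeff, phiSeries, negHSeries, PowerSeries.coeff_mul,
    Finset.Nat.sum_antidiagonal_eq_sum_range_succ_mk, PowerSeries.coeff_mk, Finset.sum_mul]

lemma phiCoeff_mulSeries (eta : Fin n → Kf n) (F F' : Fin n → PowerSeries (Lf n))
    (f : PowerSeries (Polynomial (Kf n))) (a D : ℕ) :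
    PhiCoeff n eta F (mulSeries n f F') a D
      = PowerSeries.coeff D (PowerSeries.map (Polynomial.aeval (-hbar n)).toRingHom f
          * PowerSeries.mk (PhiCoeff n eta F F' a)) := by
  have hphi : PowerSeries.mk (PhiCoeff n eta F F' a)
      = ∑ i, phiSeries eta F a i * negHSeries (F' i) := by
    ext D
    rw [PowerSeries.coeff_mk, phiCoeff_eq_sum_coeff_mul, map_sum]
  rw [hphi, Finset.mul_sum, map_sum, phiCoeff_eq_sum_coeff_mul]
  simp only [negHSeries_mulSeries, mul_left_comm]

lemma MPC.mulSeries {eta : Fin n → Kf n} {F F' : Fin n → PowerSeries (Lf n)}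
    (h : MPC n eta F F') (f : PowerSeries (Polynomial (Kf n))) :
    MPC n eta F (mulSeries n f F') := fun a D => by
  rw [isPolyH_iff_mem_range, phiCoeff_mulSeries, PowerSeries.coeff_mul]
  refine Subalgebra.sum_mem _ fun p _ => Subalgebra.mul_mem _ ?_ (isPolyH_iff_mem_range.1 ?_)
  · exact ⟨(PowerSeries.coeff p.1 f).comp (-Polynomial.X), by simp [Polynomial.aeval_comp]⟩
  · simpa using h a p.2

theorem statement2_general (n : ℕ)
    (C : ℕ → Fin n → Fin n → Kf n)
    (eta : Fin n → Kf n)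
    (F F' : Fin n → PowerSeries (Lf n))
    (hrec : CRecursive n C F')
    (f : PowerSeries (Polynomial (Kf n))) :
    CRecursive n C (mulSeries n f F') ∧
      (MPC n eta F F' → MPC n eta F (mulSeries n f F')) :=
  ⟨hrec.mulSeries f, fun h => h.mulSeries f⟩

/-- Lemma `Phistr_lmm4`(ii): if each `F(αᵢ,ħ,q)` has all its `q`-coefficients
rational in `ħ` and `F′` is `C`-recursive, then for every `f ∈ ℚ_α[ħ][[q]]` the product `f·F′`
is `C`-recursive; and if moreover `(F,F′)` satisfies the `η`-MPC, then so does `(F, f·F′)`. -/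
theorem statement2 (n : ℕ) (hn : 1 ≤ n)
    (C : ℕ → Fin n → Fin n → Kf n)
    (eta : Fin n → Kf n) (heta : ∀ i : Fin n, eta i ≠ 0)
    (F F' : Fin n → PowerSeries (Lf n))
    (hF : ∀ i : Fin n, ∀ d : ℕ, IsRatH n (PowerSeries.coeff (R := Lf n) d (F i)))
    (hrec : CRecursive n C F')
    (f : PowerSeries (Polynomial (Kf n))) :
    CRecursive n C (mulSeries n f F') ∧
      (MPC n eta F F' → MPC n eta F (mulSeries n f F')) :=
  statement2_general n C eta F F' hrec f

end SQ
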